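/- Let L : ℝ^m → ℝ^ν be continuously differentiable, f, g₁, …, g_D : ℝ^m → ℝ^m continuous, M ≥ 1 an integer, c₁, …, c_M ∈ [0,1] and b₁, …, b_M ∈ ℝ. Fix y, Ỹ ∈ ℝ^m, reals h, w₁, …, w_D, vectors α₀, …, α_D ∈ ℝ^ν, set σ(τ) = y + τ(Ỹ − y), and define Ψ = ∫₀¹ ∇L(σ(τ)) dτ − Σ_{i=1}^M b_i ∇L(σ(c_i)) ∈ ℝ^{ν×m}. Suppose the quadrature MAVF scheme equations hold: (i) Ỹ = y + h[Σ_i b_i f(σ(c_i)) − Σ_i b_i ∇L(σ(c_i))ᵀ α₀] + Σ_{r=1}^D w_r [Σ_i b_i g_r(σ(c_i)) − Σ_i b_i ∇L(σ(c_i))ᵀ α_r]; (ii) (Σ_i b_i ∇L(σ(c_i)))(Σ_i b_i ∇L(σ(c_i))ᵀ) α₀ = (Σ_i b_i ∇L(σ(c_i)))(Σ_i b_i f(σ(c_i))); (iii) for each r = 1, …, D, (Σ_i b_i ∇L(σ(c_i)))(Σ_i b_i ∇L(σ(c_i))ᵀ) α_r = (Σ_i b_i ∇L(σ(c_i)))(Σ_i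 b_i g_r(σ(c_i))). Then L(Ỹ) − L(y) = h Ψ [Σ_i b_i f(σ(c_i)) − Σ_i b_i ∇L(σ(c_i))ᵀ α₀] + Σ_{r=1}^D w_r Ψ [Σ_i b_i g_r(σ(c_i)) − Σ_i b_i ∇L(σ(c_i))ᵀ α_r]. -/

import Mathlib

open Matrix MeasureTheory

/-!
By the fundamental theorem of calculus along the segment `σ`, `L Yt - L y = A (Yt - y)`
with `A = ∫₀¹ ∇L(σ τ) dτ = Ψ + B`. The scheme equation (i) writes `Yt - y` as a
combination of residuals `u - Bᵀ α`, and equations (ii), (iii) are the normal equations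
saying that these residuals lie in the kernel of `B`; hence `B` contributes nothing and
only the quadrature defect `Ψ` survives.
-/

theorem sub_eq_intervalIntegral_fderiv_segment {E F : Type*}
    [NormedAddCommGroup E] [NormedSpace ℝ E] [NormedAddCommGroup F] [NormedSpace ℝ F]
    [CompleteSpace F] {L : E → F} (hL : ContDiff ℝ 1 L) (y d : E) :
    L (y + d) - L y = ∫ τ in (0:ℝ)..1, fderiv ℝ L (y + τ • d) d := by
  have hsegment : ∀ τ : ℝ, HasDerivAt (fun t : ℝ => y + t • d) d τ := fun τ => by
    simpa using ((hasDerivAt_id τ).smul_const d).const_add y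
  have hderiv : ∀ τ : ℝ,
      HasDerivAt (fun t => L (y + t • d)) (fderiv ℝ L (y + τ • d) d) τ := fun τ =>
    (hL.differentiable one_ne_zero _).hasFDerivAt.comp_hasDerivAt τ (hsegment τ)
  have hcont : Continuous fun τ : ℝ => fderiv ℝ L (y + τ • d) d :=
    ((hL.continuous_fderiv one_ne_zero).comp (by fun_prop)).clm_apply continuous_const
  simpa using (intervalIntegral.integral_eq_sub_of_hasDerivAt (fun τ _ => hderiv τ)
    (hcont.intervalIntegrable 0 1)).symm

theorem Matrix.mulVec_eq_of_apply_single {R m n : Type*} [CommSemiring R] [Fintype n]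
    [DecidableEq n] {J : Matrix m n R} {T : (n → R) →ₗ[R] m → R}
    (hJ : ∀ i l, J i l = T (Pi.single l 1) i) (v : n → R) : J *ᵥ v = T v := by
  have : J = LinearMap.toMatrix' T := Matrix.ext hJ
  rw [this, LinearMap.toMatrix'_mulVec]

theorem Matrix.intervalIntegral_mulVec_apply {m n : Type*} [Fintype n] {a b : ℝ}
    {A : ℝ → Matrix m n ℝ} (hA : ∀ i j, IntervalIntegrable (fun τ => A τ i j) volume a b)
    (v : n → ℝ) (i : m) :
    (of (fun i j => ∫ τ in a..b, A τ i j) *ᵥ v) i = ∫ τ in a..b, (A τ *ᵥ v) i := by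
  simp only [mulVec, dotProduct, of_apply]
  rw [intervalIntegral.integral_finsetSum fun j _ => (hA i j).mul_const (v j)]
  simp only [intervalIntegral.integral_mul_const]

theorem sub_eq_integral_jacobian_mulVec {m ν : ℕ} {L : (Fin m → ℝ) → Fin ν → ℝ}
    (hL : ContDiff ℝ 1 L) {J : (Fin m → ℝ) → Matrix (Fin ν) (Fin m) ℝ}
    (hJ : ∀ x i l, J x i l = fderiv ℝ L x (Pi.single l 1) i) (y d : Fin m → ℝ) :
    L (y + d) - L y = of (fun i l => ∫ τ in (0:ℝ)..1, J (y + τ • d) i l) *ᵥ d := by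
  have hcont : Continuous fun τ : ℝ => fderiv ℝ L (y + τ • d) :=
    (hL.continuous_fderiv one_ne_zero).comp (by fun_prop)
  have hentry : ∀ i l, IntervalIntegrable (fun τ => J (y + τ • d) i l) volume 0 1 := by
    intro i l
    simp only [hJ]
    exact ((continuous_apply i).comp (hcont.clm_apply continuous_const)).intervalIntegrable 0 1
  have hintegrable : IntervalIntegrable (fun τ : ℝ => fderiv ℝ L (y + τ • d) d) volume 0 1 :=
    (hcont.clm_apply continuous_const).intervalIntegrable 0 1
  funext i
  have hcomponent := (ContinuousLinearMap.proj (R := ℝ) (φ := fun _ : Fin ν => ℝ) i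
    ).intervalIntegral_comp_comm hintegrable
  simp only [ContinuousLinearMap.proj_apply] at hcomponent
  rw [intervalIntegral_mulVec_apply hentry, sub_eq_intervalIntegral_fderiv_segment hL,
    ← hcomponent]
  simp only [mulVec_eq_of_apply_single (hJ _), ContinuousLinearMap.coe_coe]

theorem Matrix.mulVec_sub_transpose_mulVec_eq_zero {R m n : Type*} [CommRing R]
    [Fintype m] [Fintype n] {B : Matrix m n R} {u : n → R} {α : m → R}
    (hnormal : (B * Bᵀ) *ᵥ α = B *ᵥ u) : B *ᵥ (u - Bᵀ *ᵥ α) = 0 := by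
  rw [mulVec_sub, mulVec_mulVec, hnormal, sub_self]

theorem quadrature_mavf_invariant_deviation_identity_general
    (m ν D M : ℕ)
    (L : (Fin m → ℝ) → (Fin ν → ℝ)) (hL : ContDiff ℝ 1 L)
    (c b : Fin M → ℝ)
    (y Yt : Fin m → ℝ) (h : ℝ) (w : Fin D → ℝ)
    (α₀ : Fin ν → ℝ) (α : Fin D → Fin ν → ℝ)
    (σ : ℝ → (Fin m → ℝ)) (hσ : ∀ τ, σ τ = y + τ • (Yt - y))
    -- `J x` is the ν×m Jacobian matrix of `L` at `x`
    (J : (Fin m → ℝ) → Matrix (Fin ν) (Fin m) ℝ)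
    (hJ : ∀ x i l, J x i l = fderiv ℝ L x (Pi.single l 1) i)
    -- `Ψ = ∫₀¹ ∇L(σ(τ)) dτ − Σ_i b_i ∇L(σ(c_i))` (componentwise)
    (Ψ : Matrix (Fin ν) (Fin m) ℝ)
    (hΨ : ∀ i l, Ψ i l
      = (∫ τ in (0:ℝ)..1, J (σ τ) i l) - ∑ i', b i' * J (σ (c i')) i l)
    -- quadrature approximations of the integrals in the scheme
    (B : Matrix (Fin ν) (Fin m) ℝ) (hB : B = ∑ i, b i • J (σ (c i)))
    (F : Fin m → ℝ)
    (G : Fin D → Fin m → ℝ)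
    -- the quadrature MAVF scheme equations (i), (ii), (iii)
    (heq1 : Yt = y + h • (F - Bᵀ.mulVec α₀) + ∑ r, w r • (G r - Bᵀ.mulVec (α r)))
    (heq2 : (B * Bᵀ).mulVec α₀ = B.mulVec F)
    (heq3 : ∀ r, (B * Bᵀ).mulVec (α r) = B.mulVec (G r)) :
    L Yt - L y
      = h • Ψ.mulVec (F - Bᵀ.mulVec α₀)
        + ∑ r, w r • Ψ.mulVec (G r - Bᵀ.mulVec (α r)) := by
  set d := Yt - y with hd
  have hσ' : σ = fun τ => y + τ • d := funext hσ
  have hdecomp : d = h • (F - Bᵀ *ᵥ α₀) + ∑ r, w r • (G r - Bᵀ *ᵥ α r) := by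
    rw [hd, heq1]; abel
  have hkernel : B *ᵥ d = 0 := by
    simp only [hdecomp, mulVec_add, mulVec_smul, mulVec_sum,
      mulVec_sub_transpose_mulVec_eq_zero heq2, mulVec_sub_transpose_mulVec_eq_zero (heq3 _),
      smul_zero, Finset.sum_const_zero, add_zero]
  have hsplit : of (fun i l => ∫ τ in (0:ℝ)..1, J (y + τ • d) i l) = Ψ + B := by
    ext i l
    simp [hΨ, hB, hσ', Matrix.sum_apply]
  calc L Yt - L y = (Ψ + B) *ᵥ d := by
        rw [← hsplit, ← sub_eq_integral_jacobian_mulVec hL hJ, add_sub_cancel]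
    _ = Ψ *ᵥ d := by rw [add_mulVec, hkernel, add_zero]
    _ = _ := by simp only [hdecomp, mulVec_add, mulVec_smul, mulVec_sum]

/-- identity (4.27): for the quadrature MAVF scheme, the deviation
of the invariant `L` over one step is exactly expressed through the quadrature
defect `Ψ` of the Jacobian `∇L` along the segment. -/
theorem quadrature_mavf_invariant_deviation_identity
    (m ν D M : ℕ) (hM : 1 ≤ M)
    (L : (Fin m → ℝ) → (Fin ν → ℝ)) (hL : ContDiff ℝ 1 L)
    (f : (Fin m → ℝ) → (Fin m → ℝ)) (g : Fin D → (Fin m → ℝ) → (Fin m → ℝ))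
    (hf : Continuous f) (hg : ∀ r, Continuous (g r))
    (c b : Fin M → ℝ) (hc : ∀ i, c i ∈ Set.Icc (0:ℝ) 1)
    (y Yt : Fin m → ℝ) (h : ℝ) (w : Fin D → ℝ)
    (α₀ : Fin ν → ℝ) (α : Fin D → Fin ν → ℝ)
    (σ : ℝ → (Fin m → ℝ)) (hσ : ∀ τ, σ τ = y + τ • (Yt - y))
    -- `J x` is the ν×m Jacobian matrix of `L` at `x`
    (J : (Fin m → ℝ) → Matrix (Fin ν) (Fin m) ℝ)
    (hJ : ∀ x i l, J x i l = fderiv ℝ L x (Pi.single l 1) i)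
    -- `Ψ = ∫₀¹ ∇L(σ(τ)) dτ − Σ_i b_i ∇L(σ(c_i))` (componentwise)
    (Ψ : Matrix (Fin ν) (Fin m) ℝ)
    (hΨ : ∀ i l, Ψ i l
      = (∫ τ in (0:ℝ)..1, J (σ τ) i l) - ∑ i', b i' * J (σ (c i')) i l)
    -- quadrature approximations of the integrals in the scheme
    (B : Matrix (Fin ν) (Fin m) ℝ) (hB : B = ∑ i, b i • J (σ (c i)))
    (F : Fin m → ℝ) (hF : F = ∑ i, b i • f (σ (c i)))
    (G : Fin D → Fin m → ℝ) (hG : ∀ r, G r = ∑ i, b i • g r (σ (c i)))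
    -- the quadrature MAVF scheme equations (i), (ii), (iii)
    (heq1 : Yt = y + h • (F - Bᵀ.mulVec α₀) + ∑ r, w r • (G r - Bᵀ.mulVec (α r)))
    (heq2 : (B * Bᵀ).mulVec α₀ = B.mulVec F)
    (heq3 : ∀ r, (B * Bᵀ).mulVec (α r) = B.mulVec (G r)) :
    L Yt - L y
      = h • Ψ.mulVec (F - Bᵀ.mulVec α₀)
        + ∑ r, w r • Ψ.mulVec (G r - Bᵀ.mulVec (α r)) :=
  quadrature_mavf_invariant_deviation_identity_general m ν D M L hL c b y Yt h w α₀ α σ hσ J hJ Ψ hΨ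
    B hB F G heq1 heq2 heq3
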